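/- arXiv:2008.06542 — 2 statements merged into one kernel-verified Lean document; each statement's English description precedes it below -/
import Mathlib

section
/- (Adaptive Shrinkage Property) Let r̂ : [0,∞) → [0,∞) be a concave, non-decreasing function with r̂(0) = 0 that is differentiable on (0,∞), and let λ ≥ 0. Let Z ∈ ℝ^{m×n} (m ≥ n) have singular values σ₁(Z) ≥ σ₂(Z) ≥ … ≥ σ_n(Z) ≥ 0, and for each i let σ̃ᵢ be a global minimizer of x ↦ (1/2)(x − σᵢ(Z))² + λ·r̂(|x|), chosen so that σ̃₁ ≥ σ̃₂ ≥ … ≥ σ̃_n. Then: (i) σᵢ(Z) ≥ σ̃ᵢ ≥ 0 for every i (shrinkage); and (ii) for every i with σ̃_{i+1} > 0, σᵢ(Z) − σ̃ᵢ ≤ σ_{i+1}(Z) − σ̃_{i+1} (adaptivity, i.e., larger singular values are penalized less). -/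
open scoped Matrix

/-
Each σ̃ᵢ minimizes the scalar proximal objective `½(x - σᵢ)² + λ r̂(|x|)`.
Comparing with the competitors `0` and `σᵢ` and using that `r̂` is non-decreasing gives
`0 ≤ σ̃ᵢ ≤ σᵢ`. For adaptivity, if `(σᵢ - σ̃ᵢ) - (σ_{i+1} - σ̃_{i+1}) = ε > 0`, move both
minimizers apart by a small `h ∈ (0, ε)`: replace `σ̃ᵢ` by `σ̃ᵢ + h` and `σ̃_{i+1}` by
`σ̃_{i+1} - h`. Since `σ̃_{i+1} ≤ σ̃ᵢ`, concavity of `r̂` makes the penalty part not increase, while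
the quadratic part changes by `h (h - ε) < 0`, contradicting minimality.
-/

section Concave

variable {𝕜 : Type*} [Field 𝕜] [LinearOrder 𝕜] [IsStrictOrderedRing 𝕜] {s : Set 𝕜} {f : 𝕜 → 𝕜}

theorem ConcaveOn.map_sub_add_map_add_le (hf : ConcaveOn 𝕜 s f) {a b h : 𝕜}
    (ha : a - h ∈ s) (hb : b + h ∈ s) (hab : a ≤ b) (hh : 0 ≤ h) :
    f (a - h) + f (b + h) ≤ f a + f b := by
  rcases hh.eq_or_lt with rfl | hh
  · simp
  have hd : 0 < b - a + 2 * h := by linarith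
  set μ := (b - a + h) / (b - a + 2 * h)
  set ν := h / (b - a + 2 * h)
  have hμ : 0 ≤ μ := div_nonneg (by linarith) hd.le
  have hν : 0 ≤ ν := div_nonneg hh.le hd.le
  have hμν : μ + ν = 1 := by
    rw [← add_div, div_eq_one_iff_eq hd.ne']; ring
  have hfa := hf.2 ha hb hμ hν hμν
  have hfb := hf.2 ha hb hν hμ (by rw [add_comm, hμν])
  have hxa : μ • (a - h) + ν • (b + h) = a := by simp only [smul_eq_mul, μ, ν]; field_simp; ring
  have hxb : ν • (a - h) + μ • (b + h) = b := by simp only [smul_eq_mul, μ, ν]; field_simp; ring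
  rw [hxa] at hfa
  rw [hxb] at hfb
  simp only [smul_eq_mul] at hfa hfb
  calc f (a - h) + f (b + h) = (μ + ν) * (f (a - h) + f (b + h)) := by rw [hμν, one_mul]
    _ ≤ f a + f b := by linarith

end Concave

noncomputable def proxObjective (lam : ℝ) (r : ℝ → ℝ) (z x : ℝ) : ℝ :=
  1 / 2 * (x - z) ^ 2 + lam * r |x|

def IsProxMin (lam : ℝ) (r : ℝ → ℝ) (z x : ℝ) : Prop :=
  ∀ y, proxObjective lam r z x ≤ proxObjective lam r z y

namespace IsProxMin

variable {lam : ℝ} {r : ℝ → ℝ} {z x : ℝ}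

theorem nonneg (hx : IsProxMin lam r z x) (hlam : 0 ≤ lam) (hr : MonotoneOn r (Set.Ici 0))
    (hz : 0 ≤ z) : 0 ≤ x := by
  have hx0 := hx 0
  have hr0 : r 0 ≤ r |x| := hr Set.self_mem_Ici (abs_nonneg x) (abs_nonneg x)
  simp only [proxObjective, abs_zero] at hx0
  by_contra! hneg
  nlinarith [mul_le_mul_of_nonneg_left hr0 hlam]

theorem le (hx : IsProxMin lam r z x) (hlam : 0 ≤ lam) (hr : MonotoneOn r (Set.Ici 0))
    (hz : 0 ≤ z) : x ≤ z := by
  by_contra! hzx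
  have hxz := hx z
  have hrz : r |z| ≤ r |x| := by
    rw [abs_of_nonneg hz, abs_of_pos (hz.trans_lt hzx)]
    exact hr hz (hz.trans hzx.le) hzx.le
  simp only [proxObjective, sub_self] at hxz
  nlinarith [mul_le_mul_of_nonneg_left hrz hlam, sub_pos.2 hzx]

theorem sub_le_sub {z' x' : ℝ} (hx : IsProxMin lam r z x) (hx' : IsProxMin lam r z' x')
    (hlam : 0 ≤ lam) (hr : ConcaveOn ℝ (Set.Ici 0) r) (hx'pos : 0 < x') (hx'x : x' ≤ x) :
    z - x ≤ z' - x' := by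
  by_contra! hlt
  set ε := (z - x) - (z' - x')
  have hε : 0 < ε := by linarith
  set h := min x' (ε / 2)
  have hh : 0 < h := lt_min hx'pos (half_pos hε)
  have hhx' : h ≤ x' := min_le_left _ _
  have hhε : h < ε := (min_le_right _ _).trans_lt (half_lt_self hε)
  have hxh := hx (x + h)
  have hx'h := hx' (x' - h)
  simp only [proxObjective] at hxh hx'h
  rw [abs_of_pos (by linarith : 0 < x), abs_of_pos (by linarith : 0 < x + h)] at hxh
  rw [abs_of_pos hx'pos, abs_of_nonneg (by linarith : 0 ≤ x' - h)] at hx'h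
  have hspread : r (x' - h) + r (x + h) ≤ r x' + r x :=
    hr.map_sub_add_map_add_le (Set.mem_Ici.2 (by linarith)) (Set.mem_Ici.2 (by linarith))
      hx'x hh.le
  -- the quadratic parts change by `h (h - ε)`, the penalty parts by at most `0`
  nlinarith [mul_le_mul_of_nonneg_left hspread hlam, mul_pos hh (sub_pos.2 hhε)]

end IsProxMin

theorem adaptive_shrinkage_property_general
    {n : ℕ}
    (rhat : ℝ → ℝ)
    (hr_mono : ∀ x y : ℝ, 0 ≤ x → x ≤ y → rhat x ≤ rhat y)
    (hr_concave : ConcaveOn ℝ (Set.Ici (0 : ℝ)) rhat)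
    (lam : ℝ) (hlam : 0 ≤ lam)
    (σ : Fin n → ℝ)
    (hσ_nonneg : ∀ i, 0 ≤ σ i)
    (σt : Fin n → ℝ)
    (hσt_min : ∀ i : Fin n, ∀ x : ℝ,
      (1 / 2) * (σt i - σ i) ^ 2 + lam * rhat |σt i|
        ≤ (1 / 2) * (x - σ i) ^ 2 + lam * rhat |x|)
    (hσt_sorted : ∀ i j : Fin n, i ≤ j → σt j ≤ σt i) :
    (∀ i : Fin n, 0 ≤ σt i ∧ σt i ≤ σ i) ∧
    (∀ i j : Fin n, (j : ℕ) = (i : ℕ) + 1 → 0 < σt j →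
      σ i - σt i ≤ σ j - σt j) := by
  have hmin : ∀ i, IsProxMin lam rhat (σ i) (σt i) := hσt_min
  have hmono : MonotoneOn rhat (Set.Ici 0) := fun x hx y _ hxy => hr_mono x y hx hxy
  refine ⟨fun i => ⟨(hmin i).nonneg hlam hmono (hσ_nonneg i),
    (hmin i).le hlam hmono (hσ_nonneg i)⟩, fun i j hij hσtj => ?_⟩
  have hij_le : i ≤ j := by rw [Fin.le_def]; omega
  exact (hmin i).sub_le_sub (hmin j) hlam hr_concave hσtj (hσt_sorted i j hij_le)

/-- Adaptive Shrinkage Property: Let `Z` be an `m × n` real matrix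
(`m ≥ n`) with singular value decomposition `Z = U ⬝ diagonal σ ⬝ Vᵀ`
(`U` with orthonormal columns, `V` orthogonal, `σ` non-increasing and non-negative),
let `r̂ : [0,∞) → [0,∞)` be concave, non-decreasing, `r̂ 0 = 0`, differentiable on `(0,∞)`,
and `λ ≥ 0`. For each `i`, let `σ̃ᵢ` be a global minimizer of
`x ↦ (1/2)(x - σᵢ)² + λ·r̂(|x|)`, chosen so that `σ̃` is non-increasing. Then:
(i) `σᵢ ≥ σ̃ᵢ ≥ 0` for all `i` (shrinkage), and
(ii) whenever `σ̃_{i+1} > 0`, `σᵢ - σ̃ᵢ ≤ σ_{i+1} - σ̃_{i+1}` (adaptivity). -/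
theorem adaptive_shrinkage_property
    {m n : ℕ} (hmn : n ≤ m)
    (rhat : ℝ → ℝ)
    (hr_nonneg : ∀ x : ℝ, 0 ≤ x → 0 ≤ rhat x)
    (hr_mono : ∀ x y : ℝ, 0 ≤ x → x ≤ y → rhat x ≤ rhat y)
    (hr_zero : rhat 0 = 0)
    (hr_concave : ConcaveOn ℝ (Set.Ici (0 : ℝ)) rhat)
    (hr_diff : DifferentiableOn ℝ rhat (Set.Ioi (0 : ℝ)))
    (lam : ℝ) (hlam : 0 ≤ lam)
    (Z U : Matrix (Fin m) (Fin n) ℝ) (V : Matrix (Fin n) (Fin n) ℝ)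
    (σ : Fin n → ℝ)
    (hU : Uᵀ * U = 1) (hV : Vᵀ * V = 1)
    (hSVD : Z = U * Matrix.diagonal σ * Vᵀ)
    (hσ_nonneg : ∀ i, 0 ≤ σ i)
    (hσ_sorted : ∀ i j : Fin n, i ≤ j → σ j ≤ σ i)
    (σt : Fin n → ℝ)
    (hσt_min : ∀ i : Fin n, ∀ x : ℝ,
      (1 / 2) * (σt i - σ i) ^ 2 + lam * rhat |σt i|
        ≤ (1 / 2) * (x - σ i) ^ 2 + lam * rhat |x|)
    (hσt_sorted : ∀ i j : Fin n, i ≤ j → σt j ≤ σt i) :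
    (∀ i : Fin n, 0 ≤ σt i ∧ σt i ≤ σ i) ∧
    (∀ i j : Fin n, (j : ℕ) = (i : ℕ) + 1 → 0 < σt j →
      σ i - σt i ≤ σ j - σt j) :=
  adaptive_shrinkage_property_general rhat hr_mono hr_concave lam hlam σ hσ_nonneg σt hσt_min
    hσt_sorted
end

section
/- Let Z ∈ ℝ^{m×n} with m ≥ n have a singular value decomposition Z = Ū · Diag(σ(Z)) · V̄ᵀ, where Ū ∈ ℝ^{m×n} has orthonormal columns, V̄ ∈ ℝ^{n×n} is orthogonal, and σ(Z) ∈ ℝⁿ is the vector of singular values in non-increasing order. Let 0 < λ ≤ σ₁(Z), and let σ̃ ∈ ℝⁿ be a global minimizer of the vector problem σ ↦ (1/2)‖σ − σ(Z)‖₂² + λ(‖σ‖₁ − ‖σ‖₂). Then the matrix X̃ = Ū · Diag(σ̃) · V̄ᵀ is a global minimizer over X ∈ ℝ^{m×n} of X ↦ (1/2)‖X − Z‖_F² + λ(‖X‖_* − ‖X‖_F); i.e., the proximal operator of the NNFN regularizer is obtained by applying the proximal operator of the ℓ₁-minus-ℓ₂ penalty to the singular values of Z. -/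
open scoped Matrix

/-- Frobenius norm of a real matrix. -/
noncomputable def frobNorm {m n : ℕ} (X : Matrix (Fin m) (Fin n) ℝ) : ℝ :=
  Real.sqrt (∑ i, ∑ j, (X i j) ^ 2)

/-- Nuclear norm of a real matrix: the sum of its singular values, i.e. the sum of the
square roots of the eigenvalues of `Xᴴ * X`. -/
noncomputable def nuclearNorm {m n : ℕ} (X : Matrix (Fin m) (Fin n) ℝ) : ℝ :=
  ∑ i, Real.sqrt ((Matrix.isHermitian_conjTranspose_mul_self X).eigenvalues i)

/-!
Write `X = P · diag(s) · Qᵀ` with `s` the singular values of `X` in decreasing order. Both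
`‖X‖_*` and `‖X‖_F` depend on `s` alone, and von Neumann's trace inequality
`tr(Xᵀ Z) ≤ ⟨s, σ⟩` gives `‖X - Z‖_F ≥ ‖s - σ‖₂`. Hence the matrix objective at `X` dominates
the vector objective at `s`, which dominates its value at `σ̃`, and that is the matrix objective
at `X̃`.

For von Neumann's inequality, `tr(Xᵀ Z) = ∑ s_i σ_j A_ij B_ij` with `A = Pᵀ U`, `B = Qᵀ V`.
By AM–GM and Bessel's inequality, `C = (A ∘ A + B ∘ B) / 2` is doubly substochastic, and
`∑ C_ij s_i σ_j ≤ ∑ s_i σ_i` for such `C` and decreasing nonnegative `s`, `σ`.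
-/

open Matrix

theorem sum_mul_mul_le_sum_mul_of_substochastic {n : ℕ} {C : Matrix (Fin n) (Fin n) ℝ}
    (hC : ∀ i j, 0 ≤ C i j) (hrow : ∀ i, ∑ j, C i j ≤ 1) (hcol : ∀ j, ∑ i, C i j ≤ 1)
    {s t : Fin n → ℝ} (hs : Antitone s) (ht : Antitone t) (hs0 : ∀ i, 0 ≤ s i)
    (ht0 : ∀ i, 0 ≤ t i) :
    ∑ i, ∑ j, C i j * (s i * t j) ≤ ∑ i, s i * t i := by
  induction n with
  | zero => simp
  | succ n ih =>
    -- Subtracting the last entries makes `s'`, `t'` vanish at `Fin.last n`, so the induction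
    -- hypothesis applies to them, and the constant parts are controlled by row and column sums.
    set S := s (Fin.last n)
    set T := t (Fin.last n)
    set s' := fun i => s i - S
    set t' := fun j => t j - T
    have hs' : ∀ i, 0 ≤ s' i := fun i => sub_nonneg.mpr (hs (Fin.le_last i))
    have ht' : ∀ j, 0 ≤ t' j := fun j => sub_nonneg.mpr (ht (Fin.le_last j))
    have hrow_le : ∀ x : Fin (n + 1) → ℝ, (∀ i, 0 ≤ x i) →
        ∑ i, ∑ j, C i j * x i ≤ ∑ i, x i := fun x hx =>
      Finset.sum_le_sum fun i _ => by
        rw [← Finset.sum_mul]; exact mul_le_of_le_one_left (hx i) (hrow i)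
    have hcol_le : ∀ y : Fin (n + 1) → ℝ, (∀ j, 0 ≤ y j) →
        ∑ i, ∑ j, C i j * y j ≤ ∑ j, y j := fun y hy => by
      rw [Finset.sum_comm]
      exact Finset.sum_le_sum fun j _ => by
        rw [← Finset.sum_mul]; exact mul_le_of_le_one_left (hy j) (hcol j)
    have hrestrict : ∑ i, ∑ j, C i j * (s' i * t' j) ≤ ∑ i, s' i * t' i := by
      have hs'_last : s' (Fin.last n) = 0 := sub_self S
      have ht'_last : t' (Fin.last n) = 0 := sub_self T
      simp only [Fin.sum_univ_castSucc, hs'_last, ht'_last, mul_zero, zero_mul, add_zero,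
        Finset.sum_const_zero]
      refine ih (fun i j => hC _ _) (fun i => ?_) (fun j => ?_)
        (fun i j h => sub_le_sub_right (hs (Fin.castSucc_le_castSucc_iff.mpr h)) _)
        (fun i j h => sub_le_sub_right (ht (Fin.castSucc_le_castSucc_iff.mpr h)) _)
        (fun i => hs' _) (fun j => ht' _)
      · have := hrow i.castSucc
        rw [Fin.sum_univ_castSucc] at this
        linarith [hC i.castSucc (Fin.last n)]
      · have := hcol j.castSucc
        rw [Fin.sum_univ_castSucc] at this
        linarith [hC (Fin.last n) j.castSucc]
    calc ∑ i, ∑ j, C i j * (s i * t j)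
        = ∑ i, ∑ j, C i j * (s' i * t' j) + T * ∑ i, ∑ j, C i j * s' i
            + S * ∑ i, ∑ j, C i j * t' j + S * T * ∑ i, ∑ j, C i j * 1 := by
          simp only [Finset.mul_sum, ← Finset.sum_add_distrib]
          refine Finset.sum_congr rfl fun i _ => Finset.sum_congr rfl fun j _ => ?_
          simp only [s', t']; ring
      _ ≤ ∑ i, s' i * t' i + T * ∑ i, s' i + S * ∑ j, t' j + S * T * ∑ i : Fin (n + 1), 1 := by
          gcongr ?_ + _ * ?_ + _ * ?_ + _ * ?_
          · exact ht0 _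
          · exact hrow_le s' hs'
          · exact hs0 _
          · exact hcol_le t' ht'
          · exact mul_nonneg (hs0 _) (ht0 _)
          · exact hrow_le _ fun _ => zero_le_one
      _ = ∑ i, s i * t i := by
          simp only [Finset.mul_sum, ← Finset.sum_add_distrib]
          refine Finset.sum_congr rfl fun i _ => ?_
          simp only [s', t']; ring

section OrthogonalColumns

variable {κ ι : Type*} [Fintype κ]

def HasOrthogonalColumnsOfNormLeOne (P : Matrix κ ι ℝ) : Prop :=
  (Pᵀ * P).IsDiag ∧ ∀ i, (Pᵀ * P) i i ≤ 1

namespace HasOrthogonalColumnsOfNormLeOne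

theorem of_transpose_mul_self_eq_one [DecidableEq ι] {P : Matrix κ ι ℝ} (h : Pᵀ * P = 1) :
    HasOrthogonalColumnsOfNormLeOne P := by
  rw [HasOrthogonalColumnsOfNormLeOne, h]
  exact ⟨isDiag_one, fun i => (one_apply_eq i).le⟩

variable [Fintype ι] {P : Matrix κ ι ℝ}

/-- Bessel's inequality. -/
theorem mulVec_transpose_dotProduct_self_le (hP : HasOrthogonalColumnsOfNormLeOne P)
    (x : κ → ℝ) : (Pᵀ *ᵥ x) ⬝ᵥ (Pᵀ *ᵥ x) ≤ x ⬝ᵥ x := by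
  classical
  set c := Pᵀ *ᵥ x
  have hcross : x ⬝ᵥ (P *ᵥ c) = c ⬝ᵥ c := by rw [dotProduct_mulVec, ← mulVec_transpose]
  have hproj : (P *ᵥ c) ⬝ᵥ (P *ᵥ c) ≤ c ⬝ᵥ c := by
    rw [dotProduct_mulVec, ← mulVec_transpose, mulVec_mulVec, ← hP.1.diagonal_diag]
    refine Finset.sum_le_sum fun i _ => ?_
    rw [mulVec_diagonal, diag_apply, mul_assoc]
    exact mul_le_of_le_one_left (mul_self_nonneg (c i)) (hP.2 i)
  have hres : 0 ≤ (x - P *ᵥ c) ⬝ᵥ (x - P *ᵥ c) :=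
    Finset.sum_nonneg fun k _ => mul_self_nonneg _
  rw [sub_dotProduct, dotProduct_sub, dotProduct_sub, dotProduct_comm (P *ᵥ c) x, hcross] at hres
  linarith

theorem sum_sq_transpose_mul_apply_le_one {U : Matrix κ ι ℝ}
    (hP : HasOrthogonalColumnsOfNormLeOne P) (hU : HasOrthogonalColumnsOfNormLeOne U) (j : ι) :
    ∑ i, (Pᵀ * U) i j ^ 2 ≤ 1 := by
  have hcol : (fun i => (Pᵀ * U) i j) = Pᵀ *ᵥ (fun k => U k j) := by
    ext i; simp [mul_apply, mulVec, dotProduct]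
  calc ∑ i, (Pᵀ * U) i j ^ 2 = (Pᵀ *ᵥ (fun k => U k j)) ⬝ᵥ (Pᵀ *ᵥ (fun k => U k j)) := by
        simp only [← hcol, dotProduct, sq]
    _ ≤ (fun k => U k j) ⬝ᵥ (fun k => U k j) := hP.mulVec_transpose_dotProduct_self_le _
    _ = (Uᵀ * U) j j := by simp [mul_apply, dotProduct]
    _ ≤ 1 := hU.2 j

end HasOrthogonalColumnsOfNormLeOne

theorem exists_eq_mul_diagonal_mul_transpose [Fintype ι] [DecidableEq ι] (X : Matrix κ ι ℝ)
    {Q : Matrix ι ι ℝ} (hQ : Qᵀ * Q = 1) {s : ι → ℝ}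
    (hX : Xᵀ * X = Q * diagonal (fun i => s i ^ 2) * Qᵀ) :
    ∃ P : Matrix κ ι ℝ, HasOrthogonalColumnsOfNormLeOne P ∧ X = P * diagonal s * Qᵀ := by
  have hW : (X * Q)ᵀ * (X * Q) = diagonal (fun i => s i ^ 2) := by
    rw [transpose_mul, Matrix.mul_assoc, ← Matrix.mul_assoc Xᵀ, hX]
    simp only [Matrix.mul_assoc, hQ, Matrix.mul_one]
    rw [← Matrix.mul_assoc, hQ, Matrix.one_mul]
  -- `s i = 0` forces the `i`-th column of `X * Q` to vanish, so `P` may use `0⁻¹ = 0` there.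
  have hW_col : ∀ k i, (X * Q) k i * ((s i)⁻¹ * s i) = (X * Q) k i := by
    intro k i
    by_cases hs : s i = 0
    · have hsum := congrFun (congrFun hW i) i
      rw [mul_apply, diagonal_apply_eq, hs, sq, mul_zero] at hsum
      simp only [transpose_apply] at hsum
      rw [mul_self_eq_zero.mp ((Finset.sum_eq_zero_iff_of_nonneg fun _ _ => mul_self_nonneg _).mp
        hsum k (Finset.mem_univ k)), zero_mul]
    · rw [inv_mul_cancel₀ hs, mul_one]
  refine ⟨X * Q * diagonal s⁻¹, ⟨?_, fun i => ?_⟩, ?_⟩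
  · rw [transpose_mul, diagonal_transpose, Matrix.mul_assoc, ← Matrix.mul_assoc _ (X * Q), hW,
      diagonal_mul_diagonal, diagonal_mul_diagonal]
    exact isDiag_diagonal _
  · rw [transpose_mul, diagonal_transpose, Matrix.mul_assoc, ← Matrix.mul_assoc _ (X * Q), hW,
      diagonal_mul_diagonal, diagonal_mul_diagonal, diagonal_apply_eq, Pi.inv_apply]
    by_cases hs : s i = 0
    · simp [hs]
    · exact (by field_simp : (s i)⁻¹ * (s i ^ 2 * (s i)⁻¹) = 1).le
  · have hQQ : Q * Qᵀ = 1 := mul_eq_one_comm.mp hQ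
    rw [Matrix.mul_assoc (X * Q), diagonal_mul_diagonal]
    conv_lhs => rw [← Matrix.mul_one X, ← hQQ, ← Matrix.mul_assoc]
    congr 1
    ext k i
    rw [mul_diagonal, Pi.inv_apply, hW_col]

theorem trace_transpose_mul_eq_sum {ι' : Type*} [Fintype ι] [Fintype ι'] [DecidableEq ι]
    (P U : Matrix κ ι ℝ) (Q V : Matrix ι' ι ℝ) (s σ : ι → ℝ) :
    trace ((P * diagonal s * Qᵀ)ᵀ * (U * diagonal σ * Vᵀ))
      = ∑ i, ∑ j, s i * σ j * ((Pᵀ * U) i j * (Qᵀ * V) i j) := by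
  have hcyc : (P * diagonal s * Qᵀ)ᵀ * (U * diagonal σ * Vᵀ)
      = Q * (diagonal s * (Pᵀ * U) * diagonal σ * Vᵀ) := by
    simp only [transpose_mul, transpose_transpose, diagonal_transpose, Matrix.mul_assoc]
  have hVQ : Vᵀ * Q = (Qᵀ * V)ᵀ := by rw [transpose_mul, transpose_transpose]
  rw [hcyc, trace_mul_comm, Matrix.mul_assoc, hVQ]
  refine Finset.sum_congr rfl fun i _ => Finset.sum_congr rfl fun j _ => ?_
  simp only [mul_diagonal, diagonal_mul, transpose_apply]
  ring

/-- von Neumann's trace inequality. -/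
theorem trace_transpose_mul_le {ι' : Type*} [Fintype ι'] {n : ℕ} {P U : Matrix κ (Fin n) ℝ}
    {Q V : Matrix ι' (Fin n) ℝ} (hP : HasOrthogonalColumnsOfNormLeOne P)
    (hQ : HasOrthogonalColumnsOfNormLeOne Q) (hU : HasOrthogonalColumnsOfNormLeOne U)
    (hV : HasOrthogonalColumnsOfNormLeOne V) {s σ : Fin n → ℝ} (hs : Antitone s)
    (hσ : Antitone σ) (hs0 : ∀ i, 0 ≤ s i) (hσ0 : ∀ i, 0 ≤ σ i) :
    trace ((P * diagonal s * Qᵀ)ᵀ * (U * diagonal σ * Vᵀ)) ≤ ∑ i, s i * σ i := by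
  set A := Pᵀ * U
  set B := Qᵀ * V
  have hAt : ∀ i j, (Uᵀ * P) j i = A i j := fun i j => by
    rw [← transpose_apply A, transpose_mul, transpose_transpose]
  have hBt : ∀ i j, (Vᵀ * Q) j i = B i j := fun i j => by
    rw [← transpose_apply B, transpose_mul, transpose_transpose]
  have hC_row : ∀ i, ∑ j, (A i j ^ 2 + B i j ^ 2) / 2 ≤ 1 := fun i => by
    have hA := hU.sum_sq_transpose_mul_apply_le_one hP i
    have hB := hV.sum_sq_transpose_mul_apply_le_one hQ i
    simp only [hAt, hBt] at hA hB
    rw [← Finset.sum_div, Finset.sum_add_distrib]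
    linarith
  have hC_col : ∀ j, ∑ i, (A i j ^ 2 + B i j ^ 2) / 2 ≤ 1 := fun j => by
    have hA := hP.sum_sq_transpose_mul_apply_le_one hU j
    have hB := hQ.sum_sq_transpose_mul_apply_le_one hV j
    rw [← Finset.sum_div, Finset.sum_add_distrib]
    linarith
  rw [trace_transpose_mul_eq_sum]
  calc ∑ i, ∑ j, s i * σ j * (A i j * B i j)
      ≤ ∑ i, ∑ j, (A i j ^ 2 + B i j ^ 2) / 2 * (s i * σ j) := by
        refine Finset.sum_le_sum fun i _ => Finset.sum_le_sum fun j _ => ?_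
        rw [mul_comm (_ / 2)]
        exact mul_le_mul_of_nonneg_left (by linarith [two_mul_le_add_sq (A i j) (B i j)])
          (mul_nonneg (hs0 i) (hσ0 j))
    _ ≤ ∑ i, s i * σ i :=
        sum_mul_mul_le_sum_mul_of_substochastic (fun i j => by positivity) hC_row hC_col
          hs hσ hs0 hσ0

end OrthogonalColumns

theorem Matrix.IsHermitian.exists_orthogonal_antitone_diagonalization {n : ℕ}
    {A : Matrix (Fin n) (Fin n) ℝ} (hA : A.IsHermitian) :
    ∃ (Q : Matrix (Fin n) (Fin n) ℝ) (π : Equiv.Perm (Fin n)), Qᵀ * Q = 1 ∧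
      Antitone (hA.eigenvalues ∘ π) ∧ A = Q * diagonal (hA.eigenvalues ∘ π) * Qᵀ := by
  set W : Matrix (Fin n) (Fin n) ℝ := (hA.eigenvectorUnitary : Matrix (Fin n) (Fin n) ℝ)
  have hW : Wᵀ * W = 1 := by
    rw [← conjTranspose_eq_transpose_of_trivial]
    exact hA.eigenvectorUnitary.prop.1
  have hAW : A = W * diagonal hA.eigenvalues * Wᵀ := by
    have := hA.spectral_theorem
    rwa [Unitary.conjStarAlgAut_apply, star_eq_conjTranspose,
      conjTranspose_eq_transpose_of_trivial] at this
  set π := Tuple.sort (-hA.eigenvalues)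
  refine ⟨W.submatrix id π, π, ?_,
    fun i j hij => neg_le_neg_iff.mp (Tuple.monotone_sort (-hA.eigenvalues) hij), ?_⟩
  · rw [transpose_submatrix, ← submatrix_mul _ _ _ _ _ Function.bijective_id, hW,
      submatrix_one_equiv]
  · refine hAW.trans ?_
    rw [← submatrix_diagonal_equiv, transpose_submatrix, submatrix_mul_equiv,
      submatrix_mul_equiv, submatrix_id_id]

theorem Matrix.IsHermitian.sum_eigenvalues_eq {n : Type*} [Fintype n] [DecidableEq n]
    {A V : Matrix n n ℝ} (hA : A.IsHermitian) {d : n → ℝ} (hV : Vᵀ * V = 1)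
    (hAV : A = V * diagonal d * Vᵀ) (f : ℝ → ℝ) :
    ∑ i, f (hA.eigenvalues i) = ∑ i, f (d i) := by
  have hcharpoly : A.charpoly = (diagonal d).charpoly := by
    rw [hAV, Matrix.mul_assoc, charpoly_mul_comm, Matrix.mul_assoc, hV, Matrix.mul_one]
  have hroots : Finset.univ.val.map hA.eigenvalues = Finset.univ.val.map d := by
    have := hA.roots_charpoly_eq_eigenvalues
    rw [hcharpoly, charpoly_diagonal, Polynomial.roots_prod _ _ (by
      simp [Finset.prod_ne_zero_iff, Polynomial.X_sub_C_ne_zero])] at this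
    simpa using this.symm
  simpa [Multiset.map_map] using congrArg (fun s => (s.map f).sum) hroots

section Norms

variable {m n : ℕ}

theorem frobNorm_eq_sqrt_trace (X : Matrix (Fin m) (Fin n) ℝ) :
    frobNorm X = √(trace (Xᵀ * X)) := by
  rw [frobNorm, Matrix.trace, Finset.sum_comm]
  simp only [diag_apply, mul_apply, transpose_apply, sq]

theorem frobNorm_sq (X : Matrix (Fin m) (Fin n) ℝ) : frobNorm X ^ 2 = trace (Xᵀ * X) := by
  rw [frobNorm_eq_sqrt_trace, Real.sq_sqrt]
  exact Finset.sum_nonneg fun j _ => by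
    simpa only [diag_apply, mul_apply, transpose_apply] using
      Finset.sum_nonneg fun i _ => mul_self_nonneg (X i j)

theorem frobNorm_sub_sq (X Z : Matrix (Fin m) (Fin n) ℝ) :
    frobNorm (X - Z) ^ 2 = frobNorm X ^ 2 - 2 * trace (Xᵀ * Z) + frobNorm Z ^ 2 := by
  have hsymm : trace (Zᵀ * X) = trace (Xᵀ * Z) := by
    rw [← trace_transpose, transpose_mul, transpose_transpose]
  rw [frobNorm_sq, frobNorm_sq, frobNorm_sq, transpose_sub, Matrix.sub_mul, Matrix.mul_sub,
    Matrix.mul_sub, trace_sub, trace_sub, trace_sub, hsymm]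
  ring

variable {U : Matrix (Fin m) (Fin n) ℝ} {V : Matrix (Fin n) (Fin n) ℝ}

theorem transpose_mul_self_mul_diagonal_mul (hU : Uᵀ * U = 1) (d : Fin n → ℝ) :
    (U * diagonal d * Vᵀ)ᵀ * (U * diagonal d * Vᵀ) = V * diagonal (fun i => d i ^ 2) * Vᵀ := by
  simp only [transpose_mul, transpose_transpose, diagonal_transpose, Matrix.mul_assoc]
  rw [← Matrix.mul_assoc Uᵀ, hU, Matrix.one_mul, ← Matrix.mul_assoc (diagonal d),
    diagonal_mul_diagonal]
  simp only [sq]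

theorem frobNorm_mul_diagonal_mul (hU : Uᵀ * U = 1) (hV : Vᵀ * V = 1) (d : Fin n → ℝ) :
    frobNorm (U * diagonal d * Vᵀ) = √(∑ i, d i ^ 2) := by
  rw [frobNorm_eq_sqrt_trace, transpose_mul_self_mul_diagonal_mul hU, trace_mul_cycle, hV,
    Matrix.one_mul, trace_diagonal]

theorem nuclearNorm_mul_diagonal_mul (hU : Uᵀ * U = 1) (hV : Vᵀ * V = 1) (d : Fin n → ℝ) :
    nuclearNorm (U * diagonal d * Vᵀ) = ∑ i, |d i| := by
  have hgram : (U * diagonal d * Vᵀ)ᴴ * (U * diagonal d * Vᵀ)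
      = V * diagonal (fun i => d i ^ 2) * Vᵀ := by
    rw [conjTranspose_eq_transpose_of_trivial, transpose_mul_self_mul_diagonal_mul hU]
  rw [nuclearNorm]
  exact (IsHermitian.sum_eigenvalues_eq _ hV hgram Real.sqrt).trans
    (by simp only [Real.sqrt_sq_eq_abs])

theorem exists_svd (X : Matrix (Fin m) (Fin n) ℝ) :
    ∃ (P : Matrix (Fin m) (Fin n) ℝ) (s : Fin n → ℝ) (Q : Matrix (Fin n) (Fin n) ℝ),
      HasOrthogonalColumnsOfNormLeOne P ∧ Qᵀ * Q = 1 ∧ Antitone s ∧ (∀ i, 0 ≤ s i) ∧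
      X = P * diagonal s * Qᵀ ∧ nuclearNorm X = ∑ i, s i ∧ frobNorm X = √(∑ i, s i ^ 2) := by
  have hA := isHermitian_conjTranspose_mul_self X
  obtain ⟨Q, π, hQ, hanti, hXQ⟩ := hA.exists_orthogonal_antitone_diagonalization
  set s := fun i => √(hA.eigenvalues (π i))
  have hs_sq : (fun i => s i ^ 2) = hA.eigenvalues ∘ π :=
    funext fun i => Real.sq_sqrt (eigenvalues_conjTranspose_mul_self_nonneg X _)
  obtain ⟨P, hP, hX⟩ := exists_eq_mul_diagonal_mul_transpose X hQ (s := s) (by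
    rw [hs_sq, ← hXQ, conjTranspose_eq_transpose_of_trivial])
  refine ⟨P, s, Q, hP, hQ, fun i j hij => Real.sqrt_le_sqrt (hanti hij),
    fun i => Real.sqrt_nonneg _, hX, ?_, ?_⟩
  · exact (Equiv.sum_comp π fun i => √(hA.eigenvalues i)).symm
  · rw [frobNorm_eq_sqrt_trace, ← conjTranspose_eq_transpose_of_trivial,
      hA.trace_eq_sum_eigenvalues, ← Equiv.sum_comp π]
    simp only [hs_sq]
    rfl

end Norms

theorem nnfn_prox_via_l1_minus_l2_general
    {m n : ℕ}
    (lam : ℝ)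
    (Z U : Matrix (Fin m) (Fin n) ℝ) (V : Matrix (Fin n) (Fin n) ℝ)
    (σ : Fin n → ℝ)
    (hU : Uᵀ * U = 1) (hV : Vᵀ * V = 1)
    (hSVD : Z = U * Matrix.diagonal σ * Vᵀ)
    (hσ_nonneg : ∀ i, 0 ≤ σ i)
    (hσ_sorted : ∀ i j : Fin n, i ≤ j → σ j ≤ σ i)
    (σt : Fin n → ℝ)
    (hσt_min : ∀ τ : Fin n → ℝ,
      (1 / 2) * (∑ i, (σt i - σ i) ^ 2)
          + lam * ((∑ i, |σt i|) - Real.sqrt (∑ i, (σt i) ^ 2))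
        ≤ (1 / 2) * (∑ i, (τ i - σ i) ^ 2)
          + lam * ((∑ i, |τ i|) - Real.sqrt (∑ i, (τ i) ^ 2))) :
    ∀ X : Matrix (Fin m) (Fin n) ℝ,
      (1 / 2) * (frobNorm (U * Matrix.diagonal σt * Vᵀ - Z)) ^ 2
          + lam * (nuclearNorm (U * Matrix.diagonal σt * Vᵀ)
              - frobNorm (U * Matrix.diagonal σt * Vᵀ))
        ≤ (1 / 2) * (frobNorm (X - Z)) ^ 2 + lam * (nuclearNorm X - frobNorm X) := by
  intro X
  obtain ⟨P, s, Q, hP, hQ, hs, hs0, hX, hnuc, hfrob⟩ := exists_svd X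
  have hinner : trace (Xᵀ * Z) ≤ ∑ i, s i * σ i := by
    rw [hX, hSVD]
    exact trace_transpose_mul_le hP (.of_transpose_mul_self_eq_one hQ)
      (.of_transpose_mul_self_eq_one hU) (.of_transpose_mul_self_eq_one hV) hs hσ_sorted hs0
      hσ_nonneg
  have hZ : frobNorm Z ^ 2 = ∑ i, σ i ^ 2 := by
    rw [hSVD, frobNorm_mul_diagonal_mul hU hV, Real.sq_sqrt (by positivity)]
  have hX2 : frobNorm X ^ 2 = ∑ i, s i ^ 2 := by
    rw [hfrob, Real.sq_sqrt (by positivity)]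
  have hdiff : U * diagonal σt * Vᵀ - Z = U * diagonal (fun i => σt i - σ i) * Vᵀ := by
    rw [hSVD, ← Matrix.sub_mul, ← Matrix.mul_sub, diagonal_sub]
  have hmin := hσt_min s
  simp only [abs_of_nonneg (hs0 _)] at hmin
  have hexpand : ∑ i, (s i - σ i) ^ 2 = ∑ i, s i ^ 2 - 2 * ∑ i, s i * σ i + ∑ i, σ i ^ 2 := by
    simp only [sub_sq, Finset.sum_add_distrib, Finset.sum_sub_distrib, Finset.mul_sum, mul_assoc]
  rw [hdiff, frobNorm_sub_sq, hX2, hZ, frobNorm_mul_diagonal_mul hU hV,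
    Real.sq_sqrt (by positivity), nuclearNorm_mul_diagonal_mul hU hV,
    frobNorm_mul_diagonal_mul hU hV, hnuc, hfrob]
  linarith

/-- The proximal operator of the NNFN regularizer `λ(‖·‖_* - ‖·‖_F)` at `Z` is
obtained by applying the proximal operator of the `ℓ₁ - ℓ₂` penalty to the singular values
of `Z`: if `Z = U ⬝ Diag(σ(Z)) ⬝ Vᵀ` is an SVD of `Z`, `0 < λ ≤ σ₁(Z)`, and `σ̃` globally
minimizes `σ ↦ (1/2)‖σ - σ(Z)‖₂² + λ(‖σ‖₁ - ‖σ‖₂)`, then `X̃ = U ⬝ Diag(σ̃) ⬝ Vᵀ` is a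
global minimizer of `X ↦ (1/2)‖X - Z‖_F² + λ(‖X‖_* - ‖X‖_F)`. -/
theorem nnfn_prox_via_l1_minus_l2
    {m n : ℕ} (hmn : n ≤ m) (hn : 0 < n)
    (lam : ℝ)
    (Z U : Matrix (Fin m) (Fin n) ℝ) (V : Matrix (Fin n) (Fin n) ℝ)
    (σ : Fin n → ℝ)
    (hU : Uᵀ * U = 1) (hV : Vᵀ * V = 1)
    (hSVD : Z = U * Matrix.diagonal σ * Vᵀ)
    (hσ_nonneg : ∀ i, 0 ≤ σ i)
    (hσ_sorted : ∀ i j : Fin n, i ≤ j → σ j ≤ σ i)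
    (hlam_pos : 0 < lam) (hlam_le : lam ≤ σ ⟨0, hn⟩)
    (σt : Fin n → ℝ)
    (hσt_min : ∀ τ : Fin n → ℝ,
      (1 / 2) * (∑ i, (σt i - σ i) ^ 2)
          + lam * ((∑ i, |σt i|) - Real.sqrt (∑ i, (σt i) ^ 2))
        ≤ (1 / 2) * (∑ i, (τ i - σ i) ^ 2)
          + lam * ((∑ i, |τ i|) - Real.sqrt (∑ i, (τ i) ^ 2))) :
    ∀ X : Matrix (Fin m) (Fin n) ℝ,
      (1 / 2) * (frobNorm (U * Matrix.diagonal σt * Vᵀ - Z)) ^ 2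
          + lam * (nuclearNorm (U * Matrix.diagonal σt * Vᵀ)
              - frobNorm (U * Matrix.diagonal σt * Vᵀ))
        ≤ (1 / 2) * (frobNorm (X - Z)) ^ 2 + lam * (nuclearNorm X - frobNorm X) :=
  nnfn_prox_via_l1_minus_l2_general lam Z U V σ hU hV hSVD hσ_nonneg hσ_sorted σt hσt_min
end
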